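/- Let (Ω, F, P) be a probability space, let Z : Ω → ℝ be integrable, let A ⊆ B be events with P(A) > 0 and P(B \ A) > 0, and set ν := P(A)/P(B) and m := E[Z | B]. Let δ ≥ 0 and suppose |E[Z | A] − m| ≤ δ and |E[Z | B \ A] − m| ≤ δ. Then max{ (m − (m + δ)·(1 − ν))/ν , m − δ } ≤ E[Z | A] ≤ min{ (m − (m − δ)·(1 − ν))/ν , m + δ }. -/

import Mathlib

open MeasureTheory

/-- Conditional expectation of `Z` given the event `A`: `(∫_A Z dP) / P(A)`. -/
noncomputable def condMean {Ω : Type*} [MeasurableSpace Ω] (P : Measure Ω)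
    (Z : Ω → ℝ) (A : Set Ω) : ℝ :=
  (∫ x in A, Z x ∂P) / (P A).toReal

lemma sens_aux (a c sA sC m δ : ℝ) (ha : 0 < a) (hc : 0 < c)
    (hm : m * (a + c) = sA + sC)
    (h1 : m - δ ≤ sA / a) (h2 : sA / a ≤ m + δ)
    (h3 : m - δ ≤ sC / c) (h4 : sC / c ≤ m + δ) :
    max ((m - (m + δ) * (1 - a / (a + c))) / (a / (a + c))) (m - δ) ≤ sA / a ∧
      sA / a ≤ min ((m - (m - δ) * (1 - a / (a + c))) / (a / (a + c))) (m + δ) := by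
  have hab : 0 < a + c := by linarith
  have hsc1 : (m - δ) * c ≤ sC := (le_div_iff₀ hc).mp h3
  have hsc2 : sC ≤ (m + δ) * c := (div_le_iff₀ hc).mp h4
  constructor
  · apply max_le
    · rw [div_le_div_iff₀ (by positivity) ha]
      field_simp
      nlinarith [mul_pos ha hc, mul_pos ha hab]
    · exact h1
  · apply le_min
    · rw [div_le_div_iff₀ ha (by positivity)]
      field_simp
      nlinarith [mul_pos ha hc, mul_pos ha hab]
    · exact h2

/-- The paper's sensitivity-model bound: if conditional means deviate from
the marginal mean by at most `δ`, the identification bounds strengthen. -/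
theorem sensitivity_model_bounds {Ω : Type*} [MeasurableSpace Ω]
    (P : Measure Ω) [IsProbabilityMeasure P]
    (Z : Ω → ℝ) (hZ : Integrable Z P)
    (A B : Set Ω) (hA : MeasurableSet A) (hB : MeasurableSet B)
    (hAB : A ⊆ B) (hPA : 0 < P A) (hPBA : 0 < P (B \ A))
    (δ : ℝ) (hδ : 0 ≤ δ)
    (hdevA : |condMean P Z A - condMean P Z B| ≤ δ)
    (hdevBA : |condMean P Z (B \ A) - condMean P Z B| ≤ δ) :
    max ((condMean P Z B -
            (condMean P Z B + δ) * (1 - (P A).toReal / (P B).toReal)) /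
          ((P A).toReal / (P B).toReal)) (condMean P Z B - δ) ≤
        condMean P Z A ∧
    condMean P Z A ≤
      min ((condMean P Z B -
            (condMean P Z B - δ) * (1 - (P A).toReal / (P B).toReal)) /
          ((P A).toReal / (P B).toReal)) (condMean P Z B + δ) := by
  have ha : 0 < (P A).toReal := ENNReal.toReal_pos hPA.ne' (measure_ne_top P A)
  have hc : 0 < (P (B \ A)).toReal := ENNReal.toReal_pos hPBA.ne' (measure_ne_top P _)
  have hmeas : P A + P (B \ A) = P B := by
    have h := measure_inter_add_diff (μ := P) B hA
    rwa [Set.inter_eq_right.mpr hAB] at h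
  have hb : (P B).toReal = (P A).toReal + (P (B \ A)).toReal := by
    rw [← hmeas, ENNReal.toReal_add (measure_ne_top P A) (measure_ne_top P _)]
  have hsB : ∫ x in B, Z x ∂P = (∫ x in A, Z x ∂P) + ∫ x in B \ A, Z x ∂P := by
    have h := integral_inter_add_diff (μ := P) hA (hZ.integrableOn (s := B))
    rw [Set.inter_eq_right.mpr hAB] at h
    exact h.symm
  obtain ⟨h1, h2⟩ := abs_le.mp hdevA
  obtain ⟨h3, h4⟩ := abs_le.mp hdevBA
  have hm : condMean P Z B * ((P A).toReal + (P (B \ A)).toReal)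
      = (∫ x in A, Z x ∂P) + ∫ x in B \ A, Z x ∂P := by
    rw [condMean, hsB, hb]
    field_simp
  have key := sens_aux (P A).toReal (P (B \ A)).toReal (∫ x in A, Z x ∂P)
    (∫ x in B \ A, Z x ∂P) (condMean P Z B) δ ha hc hm
    (by simpa [condMean] using (by linarith : condMean P Z B - δ ≤ condMean P Z A))
    (by simpa [condMean] using (by linarith : condMean P Z A ≤ condMean P Z B + δ))
    (by simpa [condMean] using (by linarith : condMean P Z B - δ ≤ condMean P Z (B \ A)))
    (by simpa [condMean] using (by linarith : condMean P Z (B \ A) ≤ condMean P Z B + δ))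
  simp only [condMean, hb] at key ⊢
  exact key
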